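/- arXiv:2005.01998 — 2 statements merged into one kernel-verified Lean document; each statement's English description precedes it below -/
import Mathlib

section
/- Let Φ = (G, 𝕋, φ) be a complex unit gain graph, where G is a connected bipartite graph with at least two vertices. If 𝓔(Φ) = 2μ(G), then Φ is balanced. -/
open Matrix

variable {V : Type*}

/-- A gain function on `G` with values in the circle group `𝕋 ⊆ ℂ`:
each ordered pair of adjacent vertices gets a unit complex number, and
reversing the pair inverts the gain. -/
structure IsGain (G : SimpleGraph V) (φ : V → V → ℂ) : Prop where
  unit : ∀ u v, G.Adj u v → ‖φ u v‖ = 1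
  inv : ∀ u v, G.Adj u v → φ v u = (φ u v)⁻¹

/-- The adjacency matrix of the complex unit gain graph `(G, 𝕋, φ)`. -/
noncomputable def gainAdj (G : SimpleGraph V) (φ : V → V → ℂ) : Matrix V V ℂ :=
  fun u v => @ite _ (G.Adj u v) (Classical.dec _) (φ u v) 0

theorem IsGain.isHermitian {G : SimpleGraph V} {φ : V → V → ℂ} (hg : IsGain G φ) :
    (gainAdj G φ).IsHermitian := by
  ext u v
  simp only [conjTranspose_apply, gainAdj]
  by_cases h : G.Adj u v
  · rw [if_pos h.symm, if_pos h, hg.inv u v h, Complex.inv_eq_conj (hg.unit u v h)]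
    simp
  · rw [if_neg (fun h' => h h'.symm), if_neg h]
    simp

/-- The energy of a complex unit gain graph: the sum of the absolute values of the
eigenvalues of its (Hermitian) adjacency matrix. -/
noncomputable def gainEnergy [Fintype V] [DecidableEq V] (G : SimpleGraph V) (φ : V → V → ℂ)
    (hg : IsGain G φ) : ℝ :=
  ∑ i, |hg.isHermitian.eigenvalues i|

/-- `M` is a matching of `G`: a set of edges of `G`, pairwise sharing no vertex. -/
def IsGraphMatching (G : SimpleGraph V) (M : Finset (Sym2 V)) : Prop :=
  (↑M : Set (Sym2 V)) ⊆ G.edgeSet ∧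
    ∀ e ∈ M, ∀ f ∈ M, e ≠ f → ∀ v : V, v ∈ e → v ∉ f

/-- The matching number of `G`: the largest size of a matching. -/
noncomputable def matchingNumber (G : SimpleGraph V) : ℕ :=
  sSup {n | ∃ M : Finset (Sym2 V), IsGraphMatching G M ∧ M.card = n}

/-- The gain of a walk: the product of the gains along its darts. -/
def walkGain {G : SimpleGraph V} (φ : V → V → ℂ) {u v : V} (w : G.Walk u v) : ℂ :=
  (w.darts.map fun d => φ d.toProd.1 d.toProd.2).prod

/-- A complex unit gain graph is balanced if every cycle has gain `1`. -/
def IsBalanced (G : SimpleGraph V) (φ : V → V → ℂ) : Prop :=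
  ∀ (v : V) (w : G.Walk v v), w.IsCycle → walkGain φ w = 1

theorem IsGain.anti {G H : SimpleGraph V} {φ : V → V → ℂ} (hg : IsGain G φ) (hle : H ≤ G) :
    IsGain H φ :=
  ⟨fun u v h => hg.unit u v (hle h), fun u v h => hg.inv u v (hle h)⟩

theorem IsGain.induce {G : SimpleGraph V} {φ : V → V → ℂ} (hg : IsGain G φ) (s : Set V) :
    IsGain (G.induce s) (fun a b => φ a b) :=
  ⟨fun u v h => hg.unit u v h, fun u v h => hg.inv u v h⟩


/-!
Let `M` be a maximum matching with partner map `m`, `U` the gain matrix of `M` and `A = A(Φ)`.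
`U` is a contraction and `tr (U A) = 2 |M|`; expanding the trace in an orthonormal eigenbasis of
`A` gives `2 μ(G) ≤ 𝓔(Φ)`, and equality forces `U x = sign λ • x` for every eigenpair `(λ, x)`,
so `P = U A` is positive semidefinite. As `P` is Hermitian, a vertex missed by `M` has only
unmatched neighbours, contradicting maximality; so `M` is perfect and `P` has unit diagonal.
In such a matrix an entry of modulus one forces proportional columns, so `‖P a b‖ = 1` is an
equivalence relation. Every edge `xy` has `‖P (m x) y‖ = 1`, hence by bipartiteness and
connectivity the vertices fall into the classes of `v` and `m v`. Reading the gains off the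
columns through `m v` gives `φ x y = conj (τ x) * τ y` with `|τ| = 1`, and then every closed walk
has gain one.
-/

open SimpleGraph Finset
open scoped ComplexOrder

namespace IsGain

variable {G : SimpleGraph V} {φ : V → V → ℂ} {x y : V}

theorem ne_zero (hg : IsGain G φ) (h : G.Adj x y) : φ x y ≠ 0 :=
  norm_ne_zero_iff.mp (by simp [hg.unit x y h])

theorem mul_swap_eq_one (hg : IsGain G φ) (h : G.Adj x y) : φ x y * φ y x = 1 := by
  rw [hg.inv x y h, mul_inv_cancel₀ (hg.ne_zero h)]

theorem swap_eq_conj (hg : IsGain G φ) (h : G.Adj x y) : φ y x = starRingEnd ℂ (φ x y) := by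
  rw [hg.inv x y h, Complex.inv_eq_conj (hg.unit x y h)]

end IsGain

section GainAdj

variable {G : SimpleGraph V} {φ : V → V → ℂ} {x y : V}

@[simp] theorem gainAdj_apply_of_adj (h : G.Adj x y) : gainAdj G φ x y = φ x y := by
  simp [gainAdj, h]

@[simp] theorem gainAdj_apply_of_not_adj (h : ¬G.Adj x y) : gainAdj G φ x y = 0 := by
  simp [gainAdj, h]

end GainAdj

/-- `φ` is switching equivalent to the all-one gain, through the switching function `τ`. -/
structure IsTrivializingSwitch (G : SimpleGraph V) (φ : V → V → ℂ) (τ : V → ℂ) : Prop where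
  norm_eq_one : ∀ x, ‖τ x‖ = 1
  apply_eq : ∀ x y, G.Adj x y → φ x y = starRingEnd ℂ (τ x) * τ y

section Walks

variable {G : SimpleGraph V} {φ : V → V → ℂ}

theorem walkGain_cons {u v w : V} (h : G.Adj u v) (p : G.Walk v w) :
    walkGain φ (.cons h p) = φ u v * walkGain φ p := by
  simp [walkGain]

theorem IsTrivializingSwitch.walkGain_eq {τ : V → ℂ} (hτ : IsTrivializingSwitch G φ τ) {u v : V}
    (p : G.Walk u v) : walkGain φ p = starRingEnd ℂ (τ u) * τ v := by
  have hunit : ∀ x, τ x * starRingEnd ℂ (τ x) = 1 := fun x => by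
    rw [Complex.mul_conj, Complex.normSq_eq_norm_sq, hτ.norm_eq_one]
    norm_num
  induction p with
  | nil => rw [mul_comm, hunit]; rfl
  | @cons a b c h p ih =>
    rw [walkGain_cons, ih, hτ.apply_eq a b h]
    linear_combination (starRingEnd ℂ (τ a) * τ c) * hunit b

theorem IsTrivializingSwitch.isBalanced {τ : V → ℂ} (hτ : IsTrivializingSwitch G φ τ) :
    IsBalanced G φ := by
  intro v w _
  rw [hτ.walkGain_eq, mul_comm, Complex.mul_conj, Complex.normSq_eq_norm_sq, hτ.norm_eq_one]
  norm_num

theorem SimpleGraph.Walk.rel_iterate_length {r : V → V → Prop} {m : V → V}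
    (hrefl : ∀ a, r a a) (htrans : ∀ a b c, r a b → r b c → r a c)
    (hm : ∀ a b, r a b → r (m a) (m b)) (hadj : ∀ x y, G.Adj x y → r (m x) y) {x y : V}
    (p : G.Walk x y) : r (m^[p.length] x) y := by
  have hiter : ∀ k a b, r a b → r (m^[k] a) (m^[k] b) := by
    intro k
    induction k with
    | zero => exact fun _ _ h => h
    | succ k ih =>
      intro a b h
      simpa only [Function.iterate_succ_apply'] using hm _ _ (ih a b h)
  induction p with
  | nil => exact hrefl _
  | cons h p ih =>
    rw [Walk.length_cons, Function.iterate_succ_apply]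
    exact htrans _ _ _ (hiter _ _ _ (hadj _ _ h)) ih

end Walks

section MatrixAnalysis

variable {𝕜 : Type*} [RCLike 𝕜]

theorem smul_eq_abs_smul_of_re_inner_eq_abs {E : Type*} [NormedAddCommGroup E]
    [InnerProductSpace 𝕜 E] {x y : E} {r : ℝ} (hx : ‖x‖ = 1) (hy : ‖y‖ ≤ 1)
    (h : RCLike.re (inner 𝕜 x ((r : 𝕜) • y)) = |r|) : (r : 𝕜) • y = ((|r| : ℝ) : 𝕜) • x := by
  have hsq : ‖((|r| : ℝ) : 𝕜) • x - (r : 𝕜) • y‖ ^ 2 ≤ 0 := by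
    rw [norm_sub_sq (𝕜 := 𝕜), inner_smul_left, RCLike.conj_ofReal, RCLike.re_ofReal_mul, h,
      norm_smul, norm_smul, hx, RCLike.norm_ofReal, RCLike.norm_ofReal, abs_abs]
    have : (|r| * ‖y‖) ^ 2 ≤ |r| ^ 2 := by
      gcongr
      exact mul_le_of_le_one_right (abs_nonneg r) hy
    nlinarith
  exact (sub_eq_zero.mp (norm_eq_zero.mp
    ((pow_eq_zero_iff two_ne_zero).mp (le_antisymm hsq (sq_nonneg _))))).symm

theorem Matrix.IsHermitian.norm_apply_comm {n : Type*} {M : Matrix n n 𝕜} (hM : M.IsHermitian)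
    (i j : n) : ‖M i j‖ = ‖M j i‖ := by
  rw [← hM.apply i j, norm_star]

theorem Matrix.PosSemidef.apply_eq_mul_of_norm_eq_one {n : Type*} [Fintype n]
    {P : Matrix n n 𝕜} (hP : P.PosSemidef) {a b : n} (ha : P a a = 1) (hb : P b b = 1)
    (hab : ‖P a b‖ = 1) (z : n) : P z b = P a b * P z a := by
  classical
  set v : n → 𝕜 := Pi.single b 1 - P a b • Pi.single a 1
  have hba : P b a = star (P a b) := (hP.isHermitian.apply b a).symm
  have hv : star v ⬝ᵥ P *ᵥ v = 0 := by
    simp [v, mulVec_sub, mulVec_smul, sub_dotProduct, dotProduct_sub, ha, hb, hba,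
      RCLike.conj_mul, hab]
  have hPv := congrFun ((hP.dotProduct_mulVec_zero_iff v).mp hv) z
  simpa [v, mulVec_sub, mulVec_smul, sub_eq_zero, mul_comm] using hPv

variable {n : Type*} [Fintype n] [DecidableEq n]

theorem Matrix.IsHermitian.toEuclideanLin_eigenvectorBasis {A : Matrix n n 𝕜}
    (hA : A.IsHermitian) (j : n) :
    toEuclideanLin A (hA.eigenvectorBasis j) = (hA.eigenvalues j : 𝕜) • hA.eigenvectorBasis j := by
  rw [toLpLin_apply, hA.mulVec_eigenvectorBasis, RCLike.real_smul_eq_coe_smul (K := 𝕜)]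
  rfl

theorem Matrix.IsHermitian.trace_mul_eq_sum {A : Matrix n n 𝕜} (hA : A.IsHermitian)
    (U : Matrix n n 𝕜) :
    (U * A).trace = ∑ j, inner 𝕜 (hA.eigenvectorBasis j)
      ((hA.eigenvalues j : 𝕜) • toEuclideanLin U (hA.eigenvectorBasis j)) := by
  rw [← trace_toLin_eq _ (EuclideanSpace.basisFun n 𝕜).toBasis,
    ← toEuclideanLin_eq_toLin_orthonormal, LinearMap.trace_eq_sum_inner _ hA.eigenvectorBasis]
  refine Finset.sum_congr rfl fun j _ => ?_
  rw [toLpLin_mul_same, LinearMap.comp_apply, hA.toEuclideanLin_eigenvectorBasis, map_smul]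

theorem Matrix.IsHermitian.posSemidef_of_toEuclideanLin_eigenvectorBasis {A M : Matrix n n 𝕜}
    (hA : A.IsHermitian) {d : n → ℝ} (hd : ∀ j, 0 ≤ d j)
    (hM : ∀ j, toEuclideanLin M (hA.eigenvectorBasis j) = (d j : 𝕜) • hA.eigenvectorBasis j) :
    M.PosSemidef := by
  set W : Matrix n n 𝕜 := (hA.eigenvectorUnitary : Matrix n n 𝕜)
  have hWD : M = W * diagonal (fun j => (d j : 𝕜)) * Wᴴ := by
    refine toEuclideanLin.injective (hA.eigenvectorBasis.toBasis.ext fun j => ?_)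
    rw [OrthonormalBasis.coe_toBasis, hM j, toLpLin_apply, ← mulVec_mulVec,
      ← star_eq_conjTranspose, star_eigenvectorUnitary_mulVec, ← mulVec_mulVec,
      diagonal_mulVec_single, ← smul_eq_mul, Pi.single_smul', mulVec_smul,
      eigenvectorUnitary_mulVec]
    rfl
  rw [hWD]
  exact (posSemidef_diagonal_iff.mpr fun j => by exact_mod_cast hd j).mul_mul_conjTranspose_same W

/-- Equality in `re (tr (U A)) ≤ ∑ |λⱼ|` for a contraction `U`: then `U A = |A|`. -/
theorem Matrix.IsHermitian.posSemidef_mul_of_re_trace_eq {A U : Matrix n n 𝕜}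
    (hA : A.IsHermitian) (hU : ∀ v, ‖toEuclideanLin U v‖ ≤ ‖v‖)
    (h : RCLike.re (U * A).trace = ∑ j, |hA.eigenvalues j|) : (U * A).PosSemidef := by
  set x := hA.eigenvectorBasis
  set μ := hA.eigenvalues
  have hUx : ∀ j, ‖toEuclideanLin U (x j)‖ ≤ 1 := fun j =>
    (hU _).trans (x.orthonormal.1 j).le
  have hle : ∀ j, RCLike.re (inner 𝕜 (x j) ((μ j : 𝕜) • toEuclideanLin U (x j))) ≤ |μ j| :=
    fun j => calc
      _ ≤ ‖inner 𝕜 (x j) ((μ j : 𝕜) • toEuclideanLin U (x j))‖ := RCLike.re_le_norm _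
      _ ≤ ‖x j‖ * ‖(μ j : 𝕜) • toEuclideanLin U (x j)‖ := norm_inner_le_norm _ _
      _ ≤ |μ j| := by
        rw [x.orthonormal.1 j, one_mul, norm_smul, RCLike.norm_ofReal]
        exact mul_le_of_le_one_right (abs_nonneg _) (hUx j)
  rw [hA.trace_mul_eq_sum, map_sum] at h
  have heq := (Finset.sum_eq_sum_iff_of_le fun j _ => hle j).mp h
  refine hA.posSemidef_of_toEuclideanLin_eigenvectorBasis (fun j => abs_nonneg (μ j)) fun j => ?_
  rw [toLpLin_mul_same, LinearMap.comp_apply, hA.toEuclideanLin_eigenvectorBasis, map_smul]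
  exact smul_eq_abs_smul_of_re_inner_eq_abs (x.orthonormal.1 j) (hUx j) (heq j (mem_univ j))

end MatrixAnalysis

section MatchingMatrix

variable [Fintype V] {G H : SimpleGraph V} {φ : V → V → ℂ}

theorem gainAdj_mulVec_apply_of_adj (hH : ∀ ⦃x y z⦄, H.Adj x y → H.Adj x z → y = z) {x y : V}
    (hxy : H.Adj x y) (f : V → ℂ) : (gainAdj H φ *ᵥ f) x = φ x y * f y := by
  rw [mulVec, dotProduct, Finset.sum_eq_single y _ (by simp), gainAdj_apply_of_adj hxy]
  intro z _ hzy
  rw [gainAdj_apply_of_not_adj fun hxz => hzy (hH hxz hxy), zero_mul]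

theorem gainAdj_mul_apply_of_adj (hH : ∀ ⦃x y z⦄, H.Adj x y → H.Adj x z → y = z) {x y : V}
    (hxy : H.Adj x y) (X : Matrix V V ℂ) (b : V) : (gainAdj H φ * X) x b = φ x y * X y b :=
  gainAdj_mulVec_apply_of_adj hH hxy fun z => X z b

theorem gainAdj_mul_apply_of_forall_not_adj {x : V} (hx : ∀ y, ¬H.Adj x y) (X : Matrix V V ℂ)
    (b : V) : (gainAdj H φ * X) x b = 0 := by
  simp [mul_apply, hx]

theorem norm_toEuclideanLin_gainAdj_le [DecidableEq V] (hg : IsGain H φ)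
    (hH : ∀ ⦃x y z⦄, H.Adj x y → H.Adj x z → y = z) (v : EuclideanSpace ℂ V) :
    ‖toEuclideanLin (gainAdj H φ) v‖ ≤ ‖v‖ := by
  classical
  have hrow : ∀ x, ‖(gainAdj H φ *ᵥ v) x‖ ^ 2 ≤ ∑ y, if H.Adj x y then ‖v y‖ ^ 2 else 0 := by
    intro x
    by_cases hx : ∃ y, H.Adj x y
    · obtain ⟨y, hxy⟩ := hx
      rw [gainAdj_mulVec_apply_of_adj hH hxy, norm_mul, hg.unit x y hxy, one_mul]
      exact (if_pos hxy).symm.le.trans (Finset.single_le_sum (f := fun y =>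
        if H.Adj x y then ‖v y‖ ^ 2 else 0) (fun _ _ => by positivity) (Finset.mem_univ y))
    · simp only [not_exists] at hx
      simp [mulVec, dotProduct, hx]
  have hcol : ∀ y, (∑ x, if H.Adj x y then ‖v y‖ ^ 2 else 0) ≤ ‖v y‖ ^ 2 := by
    intro y
    rw [Finset.sum_ite, sum_const_zero, add_zero, sum_const, nsmul_eq_mul]
    refine mul_le_of_le_one_left (by positivity) ?_
    refine Nat.cast_le_one.mpr (Finset.card_le_one.mpr fun a ha b hb => ?_)
    simp only [Finset.mem_filter, Finset.mem_univ, true_and] at ha hb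
    exact hH ha.symm hb.symm
  rw [EuclideanSpace.norm_eq, EuclideanSpace.norm_eq]
  refine Real.sqrt_le_sqrt ?_
  calc ∑ x, ‖(toEuclideanLin (gainAdj H φ) v) x‖ ^ 2
      ≤ ∑ x, ∑ y, if H.Adj x y then ‖v y‖ ^ 2 else 0 := Finset.sum_le_sum fun x _ => hrow x
    _ = ∑ y, ∑ x, if H.Adj x y then ‖v y‖ ^ 2 else 0 := Finset.sum_comm
    _ ≤ ∑ y, ‖v y‖ ^ 2 := Finset.sum_le_sum fun y _ => hcol y

theorem trace_gainAdj_mul_gainAdj [DecidableRel H.Adj] (hg : IsGain G φ) (hHG : H ≤ G) :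
    (gainAdj H φ * gainAdj G φ).trace = 2 * #H.edgeFinset := by
  have hdiag : ∀ x, (gainAdj H φ * gainAdj G φ) x x = H.degree x := by
    intro x
    rw [mul_apply, ← card_neighborFinset_eq_degree, neighborFinset_eq_filter, natCast_card_filter]
    refine Finset.sum_congr rfl fun z _ => ?_
    by_cases hxz : H.Adj x z
    · rw [gainAdj_apply_of_adj hxz, gainAdj_apply_of_adj (hHG hxz.symm),
        hg.mul_swap_eq_one (hHG hxz), if_pos hxz]
    · rw [gainAdj_apply_of_not_adj hxz, zero_mul, if_neg hxz]
  simp only [trace, Matrix.diag, hdiag]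
  exact_mod_cast H.sum_degrees_eq_twice_card_edges

end MatchingMatrix

namespace IsGraphMatching

variable {G : SimpleGraph V} {M : Finset (Sym2 V)} {x y z : V}

theorem fromEdgeSet_le (hM : IsGraphMatching G M) : fromEdgeSet (M : Set (Sym2 V)) ≤ G :=
  fun _ _ h => G.mem_edgeSet.mp (hM.1 ((fromEdgeSet_adj _).mp h).1)

theorem eq_of_adj_fromEdgeSet (hM : IsGraphMatching G M) (hxy : (fromEdgeSet ↑M).Adj x y)
    (hxz : (fromEdgeSet ↑M).Adj x z) : y = z := by
  rw [fromEdgeSet_adj] at hxy hxz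
  by_contra hyz
  exact hM.2 _ hxy.1 _ hxz.1 (fun h => hyz (Sym2.congr_right.mp h)) x (Sym2.mem_mk_left x y)
    (Sym2.mem_mk_left x z)

theorem card_edgeFinset_fromEdgeSet [Fintype V] [DecidableRel (fromEdgeSet (M : Set (Sym2 V))).Adj]
    (hM : IsGraphMatching G M) :
    #(fromEdgeSet (M : Set (Sym2 V))).edgeFinset = #M := by
  congr 1
  ext e
  rw [mem_edgeFinset, edgeSet_fromEdgeSet, Set.mem_sdiff, Finset.mem_coe, and_iff_left_iff_imp]
  exact fun he => G.not_isDiag_of_mem_edgeSet (hM.1 he)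

theorem exists_adj_fromEdgeSet_of_mem (hM : IsGraphMatching G M) {e : Sym2 V} (he : e ∈ M)
    (hx : x ∈ e) : ∃ y, (fromEdgeSet (M : Set (Sym2 V))).Adj x y := by
  refine ⟨Sym2.Mem.other hx, (fromEdgeSet_adj _).mpr ⟨by rwa [Sym2.other_spec hx], ?_⟩⟩
  exact (Sym2.other_ne (G.not_isDiag_of_mem_edgeSet (hM.1 he)) hx).symm

theorem insert [DecidableEq V] (hM : IsGraphMatching G M) (hxz : G.Adj x z)
    (hx : ∀ y, ¬(fromEdgeSet (M : Set (Sym2 V))).Adj x y)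
    (hz : ∀ y, ¬(fromEdgeSet (M : Set (Sym2 V))).Adj z y) :
    IsGraphMatching G (insert s(x, z) M) := by
  have hfree : ∀ e ∈ M, ∀ u ∈ e, u ≠ x ∧ u ≠ z := fun e he u hu => by
    obtain ⟨w, huw⟩ := hM.exists_adj_fromEdgeSet_of_mem he hu
    exact ⟨fun h => hx w (h ▸ huw), fun h => hz w (h ▸ huw)⟩
  refine ⟨?_, ?_⟩
  · intro e he
    rcases Finset.mem_insert.mp he with rfl | he
    exacts [hxz, hM.1 he]
  · intro e he f hf hef u hue huf
    rcases Finset.mem_insert.mp he with rfl | heM <;>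
      rcases Finset.mem_insert.mp hf with rfl | hfM
    · exact hef rfl
    · rcases Sym2.mem_iff.mp hue with rfl | rfl
      exacts [(hfree f hfM u huf).1 rfl, (hfree f hfM u huf).2 rfl]
    · rcases Sym2.mem_iff.mp huf with rfl | rfl
      exacts [(hfree e heM u hue).1 rfl, (hfree e heM u hue).2 rfl]
    · exact hM.2 e heM f hfM hef u hue huf

theorem bddAbove_card [Fintype V] :
    BddAbove {n | ∃ M : Finset (Sym2 V), IsGraphMatching G M ∧ M.card = n} := by
  classical
  exact ⟨Fintype.card (Sym2 V), fun _ ⟨M, _, hM⟩ => hM ▸ M.card_le_univ⟩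

theorem card_le_matchingNumber [Fintype V] (hM : IsGraphMatching G M) : #M ≤ matchingNumber G :=
  le_csSup bddAbove_card ⟨M, hM, rfl⟩

theorem not_adj_of_card_eq_matchingNumber [Fintype V] (hM : IsGraphMatching G M)
    (hmax : #M = matchingNumber G) (hx : ∀ y, ¬(fromEdgeSet (M : Set (Sym2 V))).Adj x y)
    (hz : ∀ y, ¬(fromEdgeSet (M : Set (Sym2 V))).Adj z y) : ¬G.Adj x z := fun hxz => by
  classical
  have hnew : s(x, z) ∉ M := fun h => hx z ((fromEdgeSet_adj _).mpr ⟨h, hxz.ne⟩)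
  have := (hM.insert hxz hx hz).card_le_matchingNumber
  rw [Finset.card_insert_of_notMem hnew] at this
  omega

end IsGraphMatching

theorem exists_isGraphMatching_card_eq_matchingNumber [Fintype V] (G : SimpleGraph V) :
    ∃ M, IsGraphMatching G M ∧ #M = matchingNumber G :=
  Nat.sSup_mem ⟨0, show ∃ M, _ from ⟨∅, ⟨by simp, by simp⟩, rfl⟩⟩ IsGraphMatching.bddAbove_card

section PerfectMatching

variable {G H : SimpleGraph V} {φ : V → V → ℂ}

theorem involutive_of_forall_adj {m : V → V} (hH : ∀ ⦃x y z⦄, H.Adj x y → H.Adj x z → y = z)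
    (hm : ∀ x, H.Adj x (m x)) : Function.Involutive m :=
  fun x => hH (hm (m x)) (hm x).symm

variable [Fintype V]

local notation "𝐏" => gainAdj H φ * gainAdj G φ

theorem forall_exists_adj_of_isHermitian (hg : IsGain G φ) (hHG : H ≤ G)
    (hH : ∀ ⦃x y z⦄, H.Adj x y → H.Adj x z → y = z) (hP : 𝐏.IsHermitian)
    (hmax : ∀ x z, (∀ y, ¬H.Adj x y) → (∀ y, ¬H.Adj z y) → ¬G.Adj x z)
    (hG : ∀ x, ∃ y, G.Adj x y) (x : V) : ∃ y, H.Adj x y := by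
  by_contra! hx
  obtain ⟨z, hxz⟩ := hG x
  refine hmax x z hx (fun w hzw => ?_) hxz
  have hwx : 𝐏 w x = 0 := by
    rw [← hP.apply w x, gainAdj_mul_apply_of_forall_not_adj hx, star_zero]
  rw [gainAdj_mul_apply_of_adj hH hzw.symm, gainAdj_apply_of_adj hxz.symm] at hwx
  exact mul_ne_zero (hg.ne_zero (hHG hzw.symm)) (hg.ne_zero hxz.symm) hwx

variable {m : V → V} (hH : ∀ ⦃x y z⦄, H.Adj x y → H.Adj x z → y = z) (hm : ∀ x, H.Adj x (m x))
include hH hm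

theorem gainAdj_mul_gainAdj_apply_partner (a b : V) : 𝐏 (m a) b = φ (m a) a * gainAdj G φ a b := by
  rw [gainAdj_mul_apply_of_adj hH (hm (m a)), involutive_of_forall_adj hH hm a]

variable (hg : IsGain G φ) (hHG : H ≤ G)
include hg hHG

theorem gainAdj_mul_gainAdj_apply_self (x : V) : 𝐏 x x = 1 := by
  rw [gainAdj_mul_apply_of_adj hH (hm x), gainAdj_apply_of_adj (hHG (hm x)).symm,
    hg.mul_swap_eq_one (hHG (hm x))]

theorem gainAdj_apply_eq_mul (a b : V) : gainAdj G φ a b = φ a (m a) * 𝐏 (m a) b := by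
  rw [gainAdj_mul_gainAdj_apply_partner hH hm, ← mul_assoc, hg.mul_swap_eq_one (hHG (hm a)),
    one_mul]

theorem norm_gainAdj_mul_gainAdj_apply_of_adj {x y : V} (hxy : G.Adj x y) : ‖𝐏 (m x) y‖ = 1 := by
  rw [gainAdj_mul_gainAdj_apply_partner hH hm, norm_mul, gainAdj_apply_of_adj hxy,
    hg.unit _ _ (hHG (hm x)).symm, hg.unit _ _ hxy, one_mul]

theorem norm_gainAdj_mul_gainAdj_apply_partner (hP : 𝐏.IsHermitian) (a b : V) :
    ‖𝐏 (m a) (m b)‖ = ‖𝐏 a b‖ := by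
  have hnorm : ∀ c d, ‖𝐏 (m c) d‖ = ‖gainAdj G φ c d‖ := fun c d => by
    rw [gainAdj_mul_gainAdj_apply_partner hH hm, norm_mul, hg.unit _ _ (hHG (hm c)).symm, one_mul]
  rw [hP.norm_apply_comm a b, ← involutive_of_forall_adj hH hm b, hnorm, hnorm,
    involutive_of_forall_adj hH hm b, hg.isHermitian.norm_apply_comm]

theorem norm_gainAdj_mul_gainAdj_apply_iterate (hP : 𝐏.PosSemidef) {v x : V} (p : G.Walk v x) :
    ‖𝐏 (m^[p.length] v) x‖ = 1 := by
  have hself := gainAdj_mul_gainAdj_apply_self hH hm hg hHG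
  refine p.rel_iterate_length (r := fun a b => ‖𝐏 a b‖ = 1) (fun a => by simp [hself]) ?_
    (fun a b h => (norm_gainAdj_mul_gainAdj_apply_partner hH hm hg hHG hP.isHermitian a b).trans h)
    (fun x y h => norm_gainAdj_mul_gainAdj_apply_of_adj hH hm hg hHG h)
  intro a b c hab hbc
  rw [hP.apply_eq_mul_of_norm_eq_one (hself b) (hself c) hbc a, norm_mul, hab, hbc, one_mul]

theorem norm_gainAdj_mul_gainAdj_apply_of_coloring (hP : 𝐏.PosSemidef) (hconn : G.Preconnected)
    (c : G.Coloring Bool) (v x : V) : ‖𝐏 (if c x = c v then v else m v) x‖ = 1 := by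
  obtain ⟨p⟩ := hconn v x
  have hpar : Even p.length ↔ c x = c v :=
    (c.even_length_iff_congr p).trans (Bool.eq_iff_iff.symm.trans eq_comm)
  have hp := norm_gainAdj_mul_gainAdj_apply_iterate hH hm hg hHG hP p
  have hinv := involutive_of_forall_adj hH hm
  split_ifs with h
  · rwa [hinv.iterate_even (hpar.mpr h)] at hp
  · rwa [hinv.iterate_odd (Nat.not_even_iff_odd.mp (mt hpar.mp h))] at hp

theorem exists_isTrivializingSwitch (hP : 𝐏.PosSemidef) (hconn : G.Connected)
    (c : G.Coloring Bool) : ∃ τ, IsTrivializingSwitch G φ τ := by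
  obtain ⟨v⟩ := hconn.nonempty
  have hclass := norm_gainAdj_mul_gainAdj_apply_of_coloring hH hm hg hHG hP hconn.preconnected c v
  have hself := gainAdj_mul_gainAdj_apply_self hH hm hg hHG
  have key : ∀ x y, G.Adj x y → c x = c v →
      φ x y = starRingEnd ℂ (gainAdj G φ (m v) x) * 𝐏 (m v) y := by
    intro x y hxy hx
    have hy : ¬c y = c v := fun hy => c.valid hxy (hx.trans hy.symm)
    have hPy : ‖𝐏 (m v) y‖ = 1 := by simpa [hy] using hclass y
    rw [← gainAdj_apply_of_adj (φ := φ) hxy, gainAdj_apply_eq_mul hH hm hg hHG,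
      hP.apply_eq_mul_of_norm_eq_one (hself _) (hself _) hPy, ← Complex.star_def,
      hg.isHermitian.apply x (m v), gainAdj_apply_eq_mul hH hm hg hHG x (m v)]
    ring
  refine ⟨fun x => if c x = c v then gainAdj G φ (m v) x else 𝐏 (m v) x, ⟨fun x => ?_, ?_⟩⟩
  · have hx := hclass x
    split_ifs at hx ⊢
    · rwa [gainAdj_apply_eq_mul hH hm hg hHG, norm_mul, hg.unit _ _ (hHG (hm _)), one_mul,
        involutive_of_forall_adj hH hm]
    · exact hx
  intro x y hxy
  by_cases hx : c x = c v
  · have hy : ¬c y = c v := fun hy => c.valid hxy (hx.trans hy.symm)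
    rw [if_pos hx, if_neg hy]
    exact key x y hxy hx
  · have hy : c y = c v := by
      have := c.valid hxy
      cases hcx : c x <;> cases hcy : c y <;> cases hcv : c v <;> simp_all
    rw [if_neg hx, if_pos hy, hg.swap_eq_conj hxy.symm, key y x hxy.symm hy, map_mul,
      Complex.conj_conj, mul_comm]

end PerfectMatching

/-- if the underlying graph is connected and bipartite with at least two
vertices, and the energy equals twice the matching number, then the gain graph is balanced. -/
theorem isBalanced_of_gainEnergy_eq [Fintype V] [DecidableEq V]
    (G : SimpleGraph V) (φ : V → V → ℂ) (hg : IsGain G φ)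
    (hconn : G.Connected) (hbip : G.Colorable 2) (hcard : 2 ≤ Fintype.card V)
    (hE : gainEnergy G φ hg = 2 * (matchingNumber G : ℝ)) :
    IsBalanced G φ := by
  classical
  obtain ⟨M, hM, hMcard⟩ := exists_isGraphMatching_card_eq_matchingNumber G
  set H := fromEdgeSet (M : Set (Sym2 V))
  have hHG : H ≤ G := hM.fromEdgeSet_le
  have hH : ∀ ⦃x y z⦄, H.Adj x y → H.Adj x z → y = z := fun _ _ _ => hM.eq_of_adj_fromEdgeSet
  have hP : (gainAdj H φ * gainAdj G φ).PosSemidef := by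
    refine hg.isHermitian.posSemidef_mul_of_re_trace_eq
      (norm_toEuclideanLin_gainAdj_le (hg.anti hHG) hH) ?_
    rw [trace_gainAdj_mul_gainAdj hg hHG, hM.card_edgeFinset_fromEdgeSet, hMcard]
    simpa [gainEnergy] using hE.symm
  have : Nontrivial V := Fintype.one_lt_card_iff_nontrivial.mp hcard
  choose m hm using forall_exists_adj_of_isHermitian hg hHG hH hP.isHermitian
    (fun x z hx hz => hM.not_adj_of_card_eq_matchingNumber hMcard hx hz)
    hconn.preconnected.exists_adj_of_nontrivial
  obtain ⟨τ, hτ⟩ :=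
    exists_isTrivializingSwitch hH hm hg hHG hP hconn (G.recolorOfEquiv finTwoEquiv hbip.some)
  exact hτ.isBalanced
end

section
/- Let K be the 4-cycle x₁y₁x₀y₀x₁ and let Φ = (K, 𝕋, φ) be a complex unit gain graph with φ(x₁,y₁) = φ(x₀,y₀) = 1, φ(y₁,x₀) = a, and φ(y₀,x₁) = b, where a, b ∈ 𝕋. Then, writing x = Re(ab), the energy of Φ equals 2√(2 + √(2 + 2x)) + 2√(2 − √(2 + 2x)), this quantity is at least 4, and it equals 4 if and only if x = 1 (equivalently, a = b̄). -/
open Matrix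

variable {V : Type*}

/-- The 4-cycle `x₁ y₁ x₀ y₀ x₁`, with `x₁ = 0`, `y₁ = 1`, `x₀ = 2`, `y₀ = 3`. -/
def cycle4 : SimpleGraph (Fin 4) :=
  SimpleGraph.fromRel fun u v =>
    (u, v) ∈ ([(0, 1), (1, 2), (2, 3), (3, 0)] : List (Fin 4 × Fin 4))

/-!
Writing `c = a + conj b`, the square of the adjacency matrix `A` is `2 + N` with
`N² = ‖c‖² = 2 + 2 Re (a b) =: s²`, so every eigenvalue `λ` satisfies `(λ² - 2)² = s²`, i.e.
`λ² - 2 = ± s`. Since `tr A² = 8` (twice the number of edges), the numbers `λ² - 2` sum to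
`0`, so `+s` and `-s` occur equally often (or `s = 0`), and the energy `∑ √λ²` is
`2 √(2 + s) + 2 √(2 - s)`. Finally `(√(2 + s) + √(2 - s))² = 4 + 2 √(4 - s²) ≥ 4`, with
equality exactly when `s = 2`, i.e. `Re (a b) = 1`.
-/

open Polynomial ComplexConjugate

theorem Finset.sum_comp_of_forall_eq_or_eq_neg {ι : Type*} [Fintype ι] (g : ℝ → ℝ)
    {e : ι → ℝ} {s : ℝ} (he : ∀ i, e i = s ∨ e i = -s) (hsum : ∑ i, e i = 0) :
    ∑ i, g (e i) = Fintype.card ι / 2 * (g s + g (-s)) := by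
  by_cases hs : s = 0
  · have he0 (i : ι) : e i = 0 := by rcases he i with h | h <;> simp [h, hs]
    simp [he0, hs]
    ring
  -- on `{s, -s}`, `g` agrees with an affine function, whose sum only depends on `∑ i, e i`
  have hlin (i : ι) : g (e i) = (g s + g (-s)) / 2 + e i * ((g s - g (-s)) / (2 * s)) := by
    rcases he i with h | h <;> rw [h] <;> field_simp <;> ring
  rw [Finset.sum_congr rfl fun i _ => hlin i, Finset.sum_add_distrib, ← Finset.sum_mul, hsum]
  simp
  ring

namespace Matrix.IsHermitian

variable {n 𝕜 : Type*} [Fintype n] [DecidableEq n] [RCLike 𝕜] {A : Matrix n n 𝕜}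

theorem eval_eigenvalues_eq_zero (hA : A.IsHermitian) {p : ℝ[X]} (hp : aeval A p = 0) (i : n) :
    p.eval (hA.eigenvalues i) = 0 := by
  have : Nonempty n := ⟨i⟩
  simpa [hp, spectrum.zero_eq] using
    spectrum.subset_polynomial_aeval A p ⟨_, hA.eigenvalues_mem_spectrum_real i, rfl⟩

theorem trace_mul_self (hA : A.IsHermitian) :
    (A * A).trace = ∑ i, ((hA.eigenvalues i ^ 2 : ℝ) : 𝕜) := by
  conv_lhs => rw [hA.spectral_theorem, ← map_mul, Unitary.conjStarAlgAut_apply, trace_mul_cycle,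
    Unitary.coe_star_mul_self, one_mul, diagonal_mul_diagonal, trace_diagonal]
  simp [sq]

theorem sum_abs_eigenvalues_eq (hA : A.IsHermitian) {t s : ℝ}
    (hp : aeval A ((X ^ 2 - C t) ^ 2 - C (s ^ 2)) = 0)
    (htr : RCLike.re (A * A).trace = Fintype.card n * t) :
    ∑ i, |hA.eigenvalues i| = Fintype.card n / 2 * (√(t + s) + √(t - s)) := by
  have he (i : n) : hA.eigenvalues i ^ 2 - t = s ∨ hA.eigenvalues i ^ 2 - t = -s := by
    have := hA.eval_eigenvalues_eq_zero hp i
    simp only [eval_sub, eval_pow, eval_X, eval_C, sub_eq_zero] at this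
    exact sq_eq_sq_iff_eq_or_eq_neg.mp this
  have hsum : ∑ i, (hA.eigenvalues i ^ 2 - t) = 0 := by
    rw [hA.trace_mul_self, map_sum] at htr
    simp only [RCLike.ofReal_re] at htr
    simp [Finset.sum_sub_distrib, htr]
  rw [sub_eq_add_neg, ← Finset.sum_comp_of_forall_eq_or_eq_neg (fun e => √(t + e)) he hsum]
  simp [Real.sqrt_sq_eq_abs]

end Matrix.IsHermitian

theorem Real.sq_sqrt_two_add_add_sqrt_two_sub {s : ℝ} (hs : |s| ≤ 2) :
    (√(2 + s) + √(2 - s)) ^ 2 = 4 + 2 * √(4 - s ^ 2) := by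
  obtain ⟨hs₁, hs₂⟩ := abs_le.mp hs
  rw [add_sq, Real.sq_sqrt (by linarith), Real.sq_sqrt (by linarith), mul_assoc,
    ← Real.sqrt_mul (by linarith)]
  ring_nf

theorem Real.two_le_sqrt_two_add_add_sqrt_two_sub {s : ℝ} (hs : |s| ≤ 2) :
    2 ≤ √(2 + s) + √(2 - s) := by
  have h := Real.sq_sqrt_two_add_add_sqrt_two_sub hs
  nlinarith [Real.sqrt_nonneg (4 - s ^ 2), Real.sqrt_nonneg (2 + s), Real.sqrt_nonneg (2 - s)]

theorem Real.sqrt_two_add_add_sqrt_two_sub_eq_two_iff {s : ℝ} (hs : |s| ≤ 2) :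
    √(2 + s) + √(2 - s) = 2 ↔ |s| = 2 := by
  rw [← sq_eq_sq₀ (by positivity) zero_le_two, Real.sq_sqrt_two_add_add_sqrt_two_sub hs,
    ← sq_abs s]
  constructor
  · intro h
    have : √(4 - |s| ^ 2) = 0 := by linarith
    rw [Real.sqrt_eq_zero'] at this
    nlinarith [abs_nonneg s]
  · intro h
    simp [h]
    norm_num

theorem Complex.normSq_add_conj_of_norm_eq_one {a b : ℂ} (ha : ‖a‖ = 1) (hb : ‖b‖ = 1) :
    normSq (a + conj b) = 2 + 2 * (a * b).re := by
  rw [normSq_add, normSq_conj, normSq_eq_norm_sq, normSq_eq_norm_sq, ha, hb, conj_conj]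
  ring

theorem Complex.re_mul_eq_one_iff_eq_conj {a b : ℂ} (ha : ‖a‖ = 1) (hb : ‖b‖ = 1) :
    (a * b).re = 1 ↔ a = conj b := by
  have hab : ‖a * b‖ = 1 := by rw [norm_mul, ha, hb, one_mul]
  rw [← Complex.inv_eq_conj hb, ← mul_eq_one_iff_eq_inv₀ (norm_ne_zero_iff.mp (hb ▸ one_ne_zero))]
  constructor
  · intro h
    have him : (a * b).im = 0 := Complex.abs_re_eq_norm.mp (by rw [h, hab, abs_one])
    exact Complex.ext (by simp [h]) (by simp [him])
  · intro h
    simp [h]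

def cycle4GainMatrix (a b : ℂ) : Matrix (Fin 4) (Fin 4) ℂ :=
  !![0, 1, 0, conj b; 1, 0, a, 0; 0, conj a, 0, 1; b, 0, 1, 0]

theorem gainAdj_cycle4 {φ : Fin 4 → Fin 4 → ℂ} (hg : IsGain cycle4 φ) {a b : ℂ}
    (ha : ‖a‖ = 1) (hb : ‖b‖ = 1)
    (h01 : φ 0 1 = 1) (h23 : φ 2 3 = 1) (h12 : φ 1 2 = a) (h30 : φ 3 0 = b) :
    gainAdj cycle4 φ = cycle4GainMatrix a b := by
  have adj : cycle4.Adj 0 1 ∧ cycle4.Adj 1 2 ∧ cycle4.Adj 2 3 ∧ cycle4.Adj 3 0 := by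
    simp [cycle4]
  have h10 : φ 1 0 = 1 := by rw [hg.inv 0 1 adj.1, h01, inv_one]
  have h21 : φ 2 1 = conj a := by rw [hg.inv 1 2 adj.2.1, h12, Complex.inv_eq_conj ha]
  have h32 : φ 3 2 = 1 := by rw [hg.inv 2 3 adj.2.2.1, h23, inv_one]
  have h03 : φ 0 3 = conj b := by rw [hg.inv 3 0 adj.2.2.2, h30, Complex.inv_eq_conj hb]
  ext i j
  fin_cases i <;> fin_cases j <;>
    simp [gainAdj, cycle4, cycle4GainMatrix, h01, h10, h12, h21, h23, h32, h30, h03]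

theorem cycle4GainMatrix_mul_self {a b : ℂ} (ha : ‖a‖ = 1) (hb : ‖b‖ = 1) :
    cycle4GainMatrix a b * cycle4GainMatrix a b =
      !![2, 0, a + conj b, 0; 0, 2, 0, a + conj b; conj a + b, 0, 2, 0; 0, conj a + b, 0, 2] := by
  ext i j
  fin_cases i <;> fin_cases j <;>
    simp [cycle4GainMatrix, Matrix.mul_apply, Fin.sum_univ_four, Complex.mul_conj',
      Complex.conj_mul', ha, hb] <;> ring

theorem trace_cycle4GainMatrix_mul_self {a b : ℂ} (ha : ‖a‖ = 1) (hb : ‖b‖ = 1) :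
    (cycle4GainMatrix a b * cycle4GainMatrix a b).trace = 8 := by
  rw [cycle4GainMatrix_mul_self ha hb]
  simp [Matrix.trace, Fin.sum_univ_four]
  norm_num

theorem aeval_cycle4GainMatrix {a b : ℂ} (ha : ‖a‖ = 1) (hb : ‖b‖ = 1) :
    aeval (cycle4GainMatrix a b) ((X ^ 2 - C 2) ^ 2 - C (2 + 2 * (a * b).re)) = 0 := by
  rw [← Complex.normSq_add_conj_of_norm_eq_one ha hb]
  simp only [map_sub, map_pow, aeval_X, aeval_C, sq (cycle4GainMatrix a b),
    cycle4GainMatrix_mul_self ha hb, Algebra.algebraMap_eq_smul_one]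
  ext i j
  fin_cases i <;> fin_cases j <;>
    simp [sq, Matrix.mul_apply, Fin.sum_univ_four, ← Complex.mul_conj] <;> ring

/-- for the gain 4-cycle with gains `1, a, 1, b` along
`x₁y₁, y₁x₀, x₀y₀, y₀x₁`, the energy equals
`2√(2 + √(2 + 2x)) + 2√(2 − √(2 + 2x))` where `x = Re (a * b)`; this is at least `4`,
with equality iff `x = 1`, equivalently `a = conj b`. -/
theorem gainEnergy_cycle4 (φ : Fin 4 → Fin 4 → ℂ) (hg : IsGain cycle4 φ)
    (a b : ℂ) (ha : ‖a‖ = 1) (hb : ‖b‖ = 1)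
    (h01 : φ 0 1 = 1) (h23 : φ 2 3 = 1) (h12 : φ 1 2 = a) (h30 : φ 3 0 = b) :
    gainEnergy cycle4 φ hg =
        2 * Real.sqrt (2 + Real.sqrt (2 + 2 * (a * b).re)) +
          2 * Real.sqrt (2 - Real.sqrt (2 + 2 * (a * b).re)) ∧
      4 ≤ gainEnergy cycle4 φ hg ∧
      (gainEnergy cycle4 φ hg = 4 ↔ (a * b).re = 1) ∧
      ((a * b).re = 1 ↔ a = (starRingEnd ℂ) b) := by
  have hA := gainAdj_cycle4 hg ha hb h01 h23 h12 h30
  set x := (a * b).re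
  have hx : |x| ≤ 1 := by
    simpa only [norm_mul, ha, hb, one_mul] using Complex.abs_re_le_norm (a * b)
  have hx₀ : 0 ≤ 2 + 2 * x := by linarith [(abs_le.mp hx).1]
  set s := √(2 + 2 * x)
  have hs : |s| ≤ 2 := by
    rw [abs_of_nonneg (Real.sqrt_nonneg _), Real.sqrt_le_left zero_le_two]
    linarith [(abs_le.mp hx).2]
  have hs_eq : |s| = 2 ↔ x = 1 := by
    rw [abs_of_nonneg (Real.sqrt_nonneg _), Real.sqrt_eq_iff_eq_sq hx₀ zero_le_two]
    constructor <;> intro h <;> linarith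
  have hE : gainEnergy cycle4 φ hg = 2 * √(2 + s) + 2 * √(2 - s) := by
    have := hg.isHermitian.sum_abs_eigenvalues_eq (t := 2) (s := s)
      (by rw [Real.sq_sqrt hx₀, hA]; exact aeval_cycle4GainMatrix ha hb)
      (by rw [hA, trace_cycle4GainMatrix_mul_self ha hb]; norm_num)
    rw [gainEnergy, this, Fintype.card_fin]
    ring
  refine ⟨hE, ?_, ?_, Complex.re_mul_eq_one_iff_eq_conj ha hb⟩
  · linarith [Real.two_le_sqrt_two_add_add_sqrt_two_sub hs]
  · rw [hE, ← hs_eq, ← Real.sqrt_two_add_add_sqrt_two_sub_eq_two_iff hs]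
    constructor <;> intro h <;> linarith
end
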